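/- Let 𝒞 be a small semicategory. Then the left suspension Σ◁(N𝒞) of the nerve of 𝒞 is a 2-Segal semi-simplicial set if and only if 𝒞 is left divisible, i.e. for every pair of morphisms f : y → z and h : x → z in 𝒞 there exists a unique morphism g : x → y with h = f ∘ g. -/
import Mathlib


universe u v

namespace SemiSeg

/-- A semi-simplicial set: a presheaf on the category of finite nonempty ordinals and
strictly monotone (injective order-preserving) maps. -/
structure SemiSSet : Type (u + 1) where
  obj : ℕ → Type u
  map : ∀ {m n : ℕ} (f : Fin (m + 1) → Fin (n + 1)), StrictMono f → obj n → obj m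
  map_id : ∀ (n : ℕ) (x : obj n), map id strictMono_id x = x
  map_comp : ∀ {l m n : ℕ} (f : Fin (l + 1) → Fin (m + 1)) (hf : StrictMono f)
    (g : Fin (m + 1) → Fin (n + 1)) (hg : StrictMono g) (x : obj n),
    map (g ∘ f) (hg.comp hf) x = map f hf (map g hg x)

/-- The strictly monotone injection `[l] → [n]`, `k ↦ i + k` (the interval
`{i, …, i + l}`). -/
def intervalF {n : ℕ} (i l : ℕ) (h : i + l ≤ n) : Fin (l + 1) → Fin (n + 1) :=
  fun k => ⟨i + k.1, by have := k.isLt; omega⟩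

theorem intervalF_mono {n : ℕ} (i l : ℕ) (h : i + l ≤ n) : StrictMono (intervalF i l h) := by
  intro a b hab
  have h' : a.1 < b.1 := hab
  simp only [intervalF, Fin.mk_lt_mk]
  omega

/-- The strictly monotone injection with image `{0,…,i} ∪ {j,…,n}`. -/
def outerF {n : ℕ} (i j : ℕ) (hij : i < j) (hj : j ≤ n) :
    Fin (n - (j - i) + 2) → Fin (n + 1) :=
  fun k => ⟨if k.1 ≤ i then k.1 else k.1 + (j - i) - 1, by have := k.isLt; split <;> omega⟩

theorem outerF_mono {n : ℕ} (i j : ℕ) (hij : i < j) (hj : j ≤ n) :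
    StrictMono (outerF i j hij hj) := by
  intro a b hab
  have h' : a.1 < b.1 := hab
  have ha := a.isLt
  have hb := b.isLt
  simp only [outerF, Fin.mk_lt_mk]
  split_ifs <;> omega

/-- The strictly monotone injection `[1] → [l]` (for `l ≥ 1`) sending `0 ↦ 0`, `1 ↦ l`. -/
def endsF (l : ℕ) (hl : 0 < l) : Fin 2 → Fin (l + 1) :=
  fun k => ⟨k.1 * l, by
    have hk : k.1 ≤ 1 := Nat.lt_succ_iff.mp k.isLt
    have h2 : k.1 * l ≤ 1 * l := Nat.mul_le_mul hk (le_refl l)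
    omega⟩

theorem endsF_mono (l : ℕ) (hl : 0 < l) : StrictMono (endsF l hl) := by
  intro a b hab
  have h' : a.1 < b.1 := hab
  have hb : b.1 ≤ 1 := Nat.lt_succ_iff.mp b.isLt
  have ha0 : a.1 = 0 := by omega
  have hb1 : b.1 = 1 := by omega
  simp only [endsF, Fin.mk_lt_mk, ha0, hb1]
  simpa using hl

/-- 2-Segal condition for a semi-simplicial set at a pair `0 ≤ i < j ≤ n`. -/
def TwoSegalMapBij (X : SemiSSet.{u}) (n i j : ℕ) (hij : i < j) (hj : j ≤ n) : Prop :=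
  ∀ (a : X.obj (n - (j - i) + 1)) (b : X.obj (j - i)),
    X.map (intervalF i 1 (by omega)) (intervalF_mono i 1 (by omega)) a =
      X.map (endsF (j - i) (by omega)) (endsF_mono (j - i) (by omega)) b →
    ∃! x : X.obj n,
      X.map (outerF i j hij hj) (outerF_mono i j hij hj) x = a ∧
      X.map (intervalF i (j - i) (by omega)) (intervalF_mono i (j - i) (by omega)) x = b

/-- A semi-simplicial set is 2-Segal if all 2-Segal maps are bijections. -/
def IsTwoSegal (X : SemiSSet.{u}) : Prop :=
  ∀ (n i j : ℕ), 3 ≤ n → ∀ (hij : i < j) (hj : j ≤ n), TwoSegalMapBij X n i j hij hj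

end SemiSeg

namespace SemiSeg

/-- A semicategory: objects, morphisms and an associative composition, but no identity
morphisms required. -/
class Semicategory (Obj : Type u) : Type (max u (v + 1)) where
  Hom : Obj → Obj → Type v
  comp : ∀ {a b c : Obj}, Hom a b → Hom b c → Hom a c
  assoc : ∀ {a b c d : Obj} (f : Hom a b) (g : Hom b c) (h : Hom c d),
    comp (comp f g) h = comp f (comp g h)

/-- The set of `n`-simplices of the nerve of a semicategory: a chain of `n` composable
morphisms, encoded by its objects and all composite morphisms `homs i j : xᵢ ⟶ xⱼ`,
`i < j` (for `n = 0` this is just an object). -/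
structure SemiNerve (C : Type u) [Semicategory.{u, v} C] (n : ℕ) : Type (max u v) where
  obj : Fin (n + 1) → C
  homs : ∀ i j : Fin (n + 1), i < j → Semicategory.Hom (obj i) (obj j)
  hcomp : ∀ (i j k : Fin (n + 1)) (hij : i < j) (hjk : j < k),
    Semicategory.comp (homs i j hij) (homs j k hjk) = homs i k (hij.trans hjk)

variable {C : Type u} [Semicategory.{u, v} C]

/-- Restriction of a nerve simplex along a strictly monotone map. -/
def SemiNerve.restrict {m n : ℕ} (f : Fin (m + 1) → Fin (n + 1)) (hf : StrictMono f)
    (x : SemiNerve C n) : SemiNerve C m where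
  obj i := x.obj (f i)
  homs i j h := x.homs (f i) (f j) (hf h)
  hcomp i j k hij hjk := x.hcomp (f i) (f j) (f k) (hf hij) (hf hjk)

theorem SemiNerve.restrict_congr {m n : ℕ} {f g : Fin (m + 1) → Fin (n + 1)} (h : f = g)
    (hf : StrictMono f) (hg : StrictMono g) (x : SemiNerve C n) :
    SemiNerve.restrict f hf x = SemiNerve.restrict g hg x := by
  subst h; rfl

theorem no_strictMono {p : ℕ} (f : Fin (p + 2) → Fin 1) (hf : StrictMono f) : False := by
  have h01 : (0 : Fin (p + 2)) < 1 := by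
    rw [Fin.lt_def]; simp
  have hlt := hf h01
  rw [Fin.lt_def] at hlt
  have h1 := (f 0).isLt
  have h2 := (f 1).isLt
  omega

/-- The map of simplices induced on the left suspension: remove the minimum. -/
def finShift {m n : ℕ} (f : Fin (m + 2) → Fin (n + 2)) (hf : StrictMono f) :
    Fin (m + 1) → Fin (n + 1) :=
  fun k => ⟨(f ⟨k.1 + 1, by have := k.isLt; omega⟩).1 - 1, by
    have := (f ⟨k.1 + 1, by have := k.isLt; omega⟩).isLt; omega⟩

theorem finShift_mono {m n : ℕ} (f : Fin (m + 2) → Fin (n + 2)) (hf : StrictMono f) :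
    StrictMono (finShift f hf) := by
  intro a b hab
  have hab' : a.1 < b.1 := hab
  have h1 : (⟨a.1 + 1, by have := a.isLt; omega⟩ : Fin (m + 2)) <
      ⟨b.1 + 1, by have := b.isLt; omega⟩ := by
    simp only [Fin.mk_lt_mk]; omega
  have h2 := hf h1
  rw [Fin.lt_def] at h2
  have h3 : (0 : Fin (m + 2)) < ⟨a.1 + 1, by have := a.isLt; omega⟩ := by
    rw [Fin.lt_def]; simp
  have h4 := hf h3
  rw [Fin.lt_def] at h4
  simp only [finShift, Fin.mk_lt_mk]
  omega

theorem finShift_id {k : ℕ} :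
    finShift (id : Fin (k + 2) → Fin (k + 2)) strictMono_id = id := by
  funext t
  apply Fin.ext
  simp [finShift]

theorem finShift_comp {l m n : ℕ} (f : Fin (l + 2) → Fin (m + 2)) (hf : StrictMono f)
    (g : Fin (m + 2) → Fin (n + 2)) (hg : StrictMono g) :
    finShift (g ∘ f) (hg.comp hf) = finShift g hg ∘ finShift f hf := by
  funext t
  have h01 : (0 : Fin (l + 2)) < ⟨t.1 + 1, by have := t.isLt; omega⟩ := by
    rw [Fin.lt_def]; simp
  have hpos := hf h01
  rw [Fin.lt_def] at hpos
  have hkey : (⟨(f ⟨t.1 + 1, by have := t.isLt; omega⟩).1 - 1 + 1,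
      by have := (f ⟨t.1 + 1, by have := t.isLt; omega⟩).isLt; omega⟩ : Fin (m + 2)) =
      f ⟨t.1 + 1, by have := t.isLt; omega⟩ := by
    apply Fin.ext
    simp only
    omega
  simp only [finShift, Function.comp_apply]
  apply Fin.ext
  simp only
  rw [hkey]

/-- The left suspension of the nerve of a semicategory `C`:  a single `0`-simplex,
`(Σ◁ N C)ₙ = (N C)_{n-1}` for `n ≥ 1`, with `∂₀ = ∂₀` and `∂ᵢ = ∂_{i-1}` for `i ≥ 1`
(equivalently, the nerve reindexed along the "remove the minimum" functor). -/
def susp (C : Type u) [Semicategory.{u, v} C] : SemiSSet.{max u v} where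
  obj n :=
    match n with
    | 0 => PUnit
    | k + 1 => SemiNerve C k
  map {m n} f hf x :=
    match m, n, f, hf, x with
    | 0, _, _, _, _ => PUnit.unit
    | _ + 1, 0, f, hf, _ => (no_strictMono f hf).elim
    | _ + 1, _ + 1, f, hf, x => SemiNerve.restrict (finShift f hf) (finShift_mono f hf) x
  map_id := by
    intro n x
    match n, x with
    | 0, PUnit.unit => rfl
    | (k + 1), x =>
      exact (SemiNerve.restrict_congr finShift_id
        (finShift_mono id strictMono_id) strictMono_id x).trans rfl
  map_comp := by
    intro l m n f hf g hg x
    match l, m, n, f, hf, g, hg, x with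
    | 0, _, _, _, _, _, _, _ => rfl
    | _ + 1, 0, _, f, hf, _, _, _ => exact (no_strictMono f hf).elim
    | _ + 1, _ + 1, 0, _, _, g, hg, _ => exact (no_strictMono g hg).elim
    | l + 1, m + 1, n + 1, f, hf, g, hg, x =>
      exact (SemiNerve.restrict_congr (finShift_comp f hf g hg)
        (finShift_mono (g ∘ f) (hg.comp hf))
        ((finShift_mono g hg).comp (finShift_mono f hf)) x).trans rfl


/-! ### Auxiliary infrastructure -/

section Infra

variable {C : Type u} [Semicategory.{u, v} C]

theorem SemiNerve.ext' {n : ℕ} {x y : SemiNerve C n} (hobj : x.obj = y.obj)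
    (hhoms : ∀ (i j : Fin (n + 1)) (h : i < j), HEq (x.homs i j h) (y.homs i j h)) :
    x = y := by
  obtain ⟨xo, xh, _⟩ := x
  obtain ⟨yo, yh, _⟩ := y
  dsimp only at hobj
  subst hobj
  have : xh = yh := by
    funext i j h
    exact eq_of_heq (hhoms i j h)
  subst this
  rfl

theorem SemiNerve.homs_heq {n : ℕ} {x y : SemiNerve C n} (e : x = y) (i j : Fin (n + 1))
    (h h' : i < j) : HEq (x.homs i j h) (y.homs i j h') := by subst e; rfl

theorem SemiNerve.homs_congr' {n : ℕ} (x : SemiNerve C n) {i j i' j' : Fin (n + 1)}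
    (hi : i = i') (hj : j = j') (h : i < j) (h' : i' < j') :
    HEq (x.homs i j h) (x.homs i' j' h') := by subst hi; subst hj; rfl

theorem SemiNerve.obj_congr {n : ℕ} (x : SemiNerve C n) {i i' : Fin (n + 1)} (hi : i = i') :
    x.obj i = x.obj i' := by rw [hi]

/-- Cast a morphism along equalities of its endpoints. -/
def homCast {a b a' b' : C} (ha : a = a') (hb : b = b') (f : Semicategory.Hom a b) :
    Semicategory.Hom a' b' := ha ▸ hb ▸ f

theorem homCast_heq {a b a' b' : C} (ha : a = a') (hb : b = b') (f : Semicategory.Hom a b) :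
    HEq (homCast ha hb f) f := by subst ha; subst hb; rfl

theorem comp_heq {a b c a' b' c' : C} (ha : a = a') (hb : b = b') (hc : c = c')
    {f : Semicategory.Hom a b} {f' : Semicategory.Hom a' b'}
    {g : Semicategory.Hom b c} {g' : Semicategory.Hom b' c'}
    (hf : HEq f f') (hg : HEq g g') :
    HEq (Semicategory.comp f g) (Semicategory.comp f' g') := by
  subst ha; subst hb; subst hc
  rw [eq_of_heq hf, eq_of_heq hg]

theorem comp_homCast_eq {A B D A' B' D' : C} (eA : A = A') (eB : B = B') (eD : D = D')
    {f : Semicategory.Hom A B} {g : Semicategory.Hom B D} {h : Semicategory.Hom A D}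
    {f' : Semicategory.Hom A' B'} {g' : Semicategory.Hom B' D'} {h' : Semicategory.Hom A' D'}
    (hf : HEq f f') (hg : HEq g g') (hh : HEq h h')
    (hc : Semicategory.comp f g = h) : Semicategory.comp f' g' = h' := by
  subst eA; subst eB; subst eD
  rw [← eq_of_heq hf, ← eq_of_heq hg, ← eq_of_heq hh]
  exact hc

theorem comp_cast_r {A B D D' : C} (e : D = D') (f : Semicategory.Hom A B)
    (g : Semicategory.Hom B D) :
    Semicategory.comp f (homCast rfl e g) = homCast rfl e (Semicategory.comp f g) := by
  subst e; rfl

theorem comp_cast_l {A A' B D : C} (e : A = A') (f : Semicategory.Hom A B)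
    (g : Semicategory.Hom B D) :
    Semicategory.comp (homCast e rfl f) g = homCast e rfl (Semicategory.comp f g) := by
  subst e; rfl

theorem comp_cast_lr {A B B' D : C} (e : B = B') (f : Semicategory.Hom A B)
    (g : Semicategory.Hom B D) :
    Semicategory.comp (homCast rfl e f) (homCast e rfl g) = Semicategory.comp f g := by
  subst e; rfl

theorem homCast_homCast {a b a' b' a'' b'' : C} (h1 : a = a') (h2 : b = b') (h3 : a' = a'')
    (h4 : b' = b'') (f : Semicategory.Hom a b) :
    homCast h3 h4 (homCast h1 h2 f) = homCast (h1.trans h3) (h2.trans h4) f := by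
  subst h1; subst h2; subst h3; subst h4; rfl

theorem heq_homCast_iff {a b a' b' : C} (ha : a = a') (hb : b = b')
    (f : Semicategory.Hom a b) (g : Semicategory.Hom a' b') :
    homCast ha hb f = g ↔ HEq f g := by
  subst ha; subst hb
  simp [homCast]

end Infra

/-! ### The forward direction: 2-Segal implies left divisibility -/

section Forward

variable {C : Type u} [Semicategory.{u, v} C]

/-- The 1-simplex of the nerve corresponding to a single morphism. -/
def mk1 (x y : C) (f : Semicategory.Hom x y) : SemiNerve C 1 where
  obj := fun k => match k with
    | ⟨0, _⟩ => x
    | ⟨1, _⟩ => y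
  homs := fun k l h => match k, l, h with
    | ⟨0, _⟩, ⟨1, _⟩, _ => f
    | ⟨0, _⟩, ⟨0, _⟩, h => absurd (show (0:ℕ) < 0 from h) (by omega)
    | ⟨1, _⟩, ⟨0, _⟩, h => absurd (show (1:ℕ) < 0 from h) (by omega)
    | ⟨1, _⟩, ⟨1, _⟩, h => absurd (show (1:ℕ) < 1 from h) (by omega)
  hcomp := by
    intro p q r hpq hqr
    exfalso
    have h1 : p.1 < q.1 := hpq
    have h2 : q.1 < r.1 := hqr
    have := r.isLt
    omega

/-- The 2-simplex of the nerve corresponding to a commuting triangle. -/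
def mk2 (x y z : C) (g : Semicategory.Hom x y) (f : Semicategory.Hom y z)
    (h : Semicategory.Hom x z) (hc : Semicategory.comp g f = h) : SemiNerve C 2 where
  obj := fun k => match k with
    | ⟨0, _⟩ => x
    | ⟨1, _⟩ => y
    | ⟨2, _⟩ => z
  homs := fun k l hkl => match k, l, hkl with
    | ⟨0, _⟩, ⟨1, _⟩, _ => g
    | ⟨1, _⟩, ⟨2, _⟩, _ => f
    | ⟨0, _⟩, ⟨2, _⟩, _ => h
    | ⟨0, _⟩, ⟨0, _⟩, hkl => absurd (show (0:ℕ) < 0 from hkl) (by omega)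
    | ⟨1, _⟩, ⟨0, _⟩, hkl => absurd (show (1:ℕ) < 0 from hkl) (by omega)
    | ⟨1, _⟩, ⟨1, _⟩, hkl => absurd (show (1:ℕ) < 1 from hkl) (by omega)
    | ⟨2, _⟩, ⟨0, _⟩, hkl => absurd (show (2:ℕ) < 0 from hkl) (by omega)
    | ⟨2, _⟩, ⟨1, _⟩, hkl => absurd (show (2:ℕ) < 1 from hkl) (by omega)
    | ⟨2, _⟩, ⟨2, _⟩, hkl => absurd (show (2:ℕ) < 2 from hkl) (by omega)
  hcomp := by
    intro p q r hpq hqr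
    obtain ⟨pv, hpl⟩ := p
    obtain ⟨qv, hql⟩ := q
    obtain ⟨rv, hrl⟩ := r
    have h1 : pv < qv := hpq
    have h2 : qv < rv := hqr
    have hp : pv = 0 := by omega
    subst hp
    have hq : qv = 1 := by omega
    subst hq
    have hr : rv = 2 := by omega
    subst hr
    exact hc

theorem forward_div (h2 : IsTwoSegal (susp C)) :
    ∀ {x y z : C} (f : Semicategory.Hom y z) (h : Semicategory.Hom x z),
      ∃! g : Semicategory.Hom x y, Semicategory.comp g f = h := by
  intro x y z f h
  have key := h2 3 1 3 (by omega) (by omega) (by omega)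
  have hab : (susp C).map (intervalF (n := 2) 1 1 (by omega))
        (intervalF_mono (n := 2) 1 1 (by omega)) (mk1 x z h : SemiNerve C 1) =
      (susp C).map (endsF (3 - 1) (by omega)) (endsF_mono (3 - 1) (by omega))
        (mk1 y z f : SemiNerve C 1) := by
    apply SemiNerve.ext'
    · funext t
      match t with
      | ⟨0, _⟩ => rfl
    · intro i j hij
      obtain ⟨iv, hil⟩ := i
      obtain ⟨jv, hjl⟩ := j
      have h1 : iv < jv := hij
      have h2 : jv < 0 + 1 := hjl
      omega
  obtain ⟨x₀, ⟨hoa, hob⟩, huniq⟩ := key (mk1 x z h) (mk1 y z f) hab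
  have e0 : x₀.obj (⟨0, by omega⟩ : Fin 3) = x :=
    congrArg (fun s : SemiNerve C 1 => s.obj (⟨0, by omega⟩ : Fin 2)) hoa
  have e1 : x₀.obj (⟨1, by omega⟩ : Fin 3) = y :=
    congrArg (fun s : SemiNerve C 1 => s.obj (⟨0, by omega⟩ : Fin 2)) hob
  have e2 : x₀.obj (⟨2, by omega⟩ : Fin 3) = z :=
    congrArg (fun s : SemiNerve C 1 => s.obj (⟨1, by omega⟩ : Fin 2)) hob
  have hf0 : HEq (x₀.homs (⟨1, by omega⟩ : Fin 3) (⟨2, by omega⟩ : Fin 3)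
      (Fin.mk_lt_mk.mpr (by omega))) f :=
    SemiNerve.homs_heq hob (⟨0, by omega⟩ : Fin 2) (⟨1, by omega⟩ : Fin 2)
      (Fin.mk_lt_mk.mpr (by omega)) (Fin.mk_lt_mk.mpr (by omega))
  have hh0 : HEq (x₀.homs (⟨0, by omega⟩ : Fin 3) (⟨2, by omega⟩ : Fin 3)
      (Fin.mk_lt_mk.mpr (by omega))) h :=
    SemiNerve.homs_heq hoa (⟨0, by omega⟩ : Fin 2) (⟨1, by omega⟩ : Fin 2)
      (Fin.mk_lt_mk.mpr (by omega)) (Fin.mk_lt_mk.mpr (by omega))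
  refine ⟨homCast e0 e1 (x₀.homs (⟨0, by omega⟩ : Fin 3) (⟨1, by omega⟩ : Fin 3)
    (Fin.mk_lt_mk.mpr (by omega))), ?_, ?_⟩
  · apply eq_of_heq
    refine HEq.trans (comp_heq e0.symm e1.symm e2.symm
      (homCast_heq e0 e1 _) hf0.symm) ?_
    exact HEq.trans (heq_of_eq (x₀.hcomp (⟨0, by omega⟩ : Fin 3) (⟨1, by omega⟩ : Fin 3)
      (⟨2, by omega⟩ : Fin 3) (Fin.mk_lt_mk.mpr (by omega)) (Fin.mk_lt_mk.mpr (by omega)))) hh0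
  · intro g' hg'
    have hs' : mk2 x y z g' f h hg' = x₀ := by
      apply huniq
      constructor
      · apply SemiNerve.ext'
        · funext t
          match t with
          | ⟨0, _⟩ => rfl
          | ⟨1, _⟩ => rfl
        · intro i j hij
          obtain ⟨iv, hil⟩ := i
          obtain ⟨jv, hjl⟩ := j
          have h1 : iv < jv := hij
          have h2 : jv < 1 + 1 := hjl
          have hi : iv = 0 := by omega
          subst hi
          have hjv : jv = 1 := by omega
          subst hjv
          exact HEq.rfl
      · apply SemiNerve.ext'
        · funext t
          match t with
          | ⟨0, _⟩ => rfl
          | ⟨1, _⟩ => rfl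
        · intro i j hij
          obtain ⟨iv, hil⟩ := i
          obtain ⟨jv, hjl⟩ := j
          have h1 : iv < jv := hij
          have h2 : jv < 1 + 1 := hjl
          have hi : iv = 0 := by omega
          subst hi
          have hjv : jv = 1 := by omega
          subst hjv
          exact HEq.rfl
    apply eq_of_heq
    refine HEq.trans ?_ (homCast_heq e0 e1 _).symm
    exact SemiNerve.homs_heq hs' (⟨0, by omega⟩ : Fin 3) (⟨1, by omega⟩ : Fin 3)
      (Fin.mk_lt_mk.mpr (by omega)) (Fin.mk_lt_mk.mpr (by omega))

end Forward

/-! ### The backward direction: left divisibility implies 2-Segal -/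

/-- Left divisibility. -/
def LeftDivisible (C : Type u) [Semicategory.{u, v} C] : Prop :=
  ∀ {x y z : C} (f : Semicategory.Hom y z) (h : Semicategory.Hom x z),
    ∃! g : Semicategory.Hom x y, Semicategory.comp g f = h

theorem finmk_eq {n a b : ℕ} (h : a = b) (ha : a < n) (hb : b < n) :
    (⟨a, ha⟩ : Fin n) = ⟨b, hb⟩ := by subst h; rfl

section Glue

variable {C : Type u} [Semicategory.{u, v} C]
variable {m i e p : ℕ}

/-- Objects of the glued simplex. -/
def gobj (hie : i + e + 1 ≤ m + 1) (hp : m - e = p) (a : SemiNerve C p) (b : SemiNerve C e)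
    (v : Fin (m + 1)) : C :=
  if _h1 : v.1 < i then a.obj ⟨v.1, by omega⟩
  else if _h2 : v.1 ≤ i + e then b.obj ⟨v.1 - i, by omega⟩
  else a.obj ⟨v.1 - e, by have := v.isLt; omega⟩

variable (hie : i + e + 1 ≤ m + 1) (hp : m - e = p) (a : SemiNerve C p) (b : SemiNerve C e)

theorem gobj_L (v : Fin (m + 1)) (h : v.1 < i) :
    gobj hie hp a b v = a.obj ⟨v.1, by omega⟩ := dif_pos h

theorem gobj_M (v : Fin (m + 1)) (h1 : i ≤ v.1) (h2 : v.1 ≤ i + e) :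
    gobj hie hp a b v = b.obj ⟨v.1 - i, by omega⟩ := by
  unfold gobj
  rw [dif_neg (by omega), dif_pos h2]

theorem gobj_H (v : Fin (m + 1)) (h : i + e < v.1) :
    gobj hie hp a b v = a.obj ⟨v.1 - e, by have := v.isLt; omega⟩ := by
  unfold gobj
  rw [dif_neg (by omega), dif_neg (by omega)]

variable (hab : a.obj ⟨i, by omega⟩ = b.obj ⟨e, by omega⟩)

/-- The unique divisor used to fill in the missing morphisms. -/
theorem gdivEx (hdiv : LeftDivisible C) (u v : ℕ) (hu : u < i) (hv1 : i ≤ v)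
    (hv2 : v < i + e) :
    ∃! g : Semicategory.Hom (a.obj ⟨u, by omega⟩) (b.obj ⟨v - i, by omega⟩),
      Semicategory.comp g
          (b.homs ⟨v - i, by omega⟩ ⟨e, by omega⟩ (Fin.mk_lt_mk.mpr (by omega))) =
        homCast rfl hab (a.homs ⟨u, by omega⟩ ⟨i, by omega⟩ (Fin.mk_lt_mk.mpr (by omega))) :=
  hdiv _ _

noncomputable def gdiv (hdiv : LeftDivisible C) (u v : ℕ) (hu : u < i) (hv1 : i ≤ v) (hv2 : v < i + e) :
    Semicategory.Hom (a.obj ⟨u, by omega⟩) (b.obj ⟨v - i, by omega⟩) :=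
  (gdivEx hie hp a b hab hdiv u v hu hv1 hv2).choose

theorem gdiv_spec (hdiv : LeftDivisible C) (u v : ℕ) (hu : u < i) (hv1 : i ≤ v)
    (hv2 : v < i + e) :
    Semicategory.comp (gdiv hie hp a b hab hdiv u v hu hv1 hv2)
        (b.homs ⟨v - i, by omega⟩ ⟨e, by omega⟩ (Fin.mk_lt_mk.mpr (by omega))) =
      homCast rfl hab (a.homs ⟨u, by omega⟩ ⟨i, by omega⟩ (Fin.mk_lt_mk.mpr (by omega))) :=
  (gdivEx hie hp a b hab hdiv u v hu hv1 hv2).choose_spec.1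

theorem gdiv_uniq (hdiv : LeftDivisible C) (u v : ℕ) (hu : u < i) (hv1 : i ≤ v)
    (hv2 : v < i + e)
    (g : Semicategory.Hom (a.obj ⟨u, by omega⟩) (b.obj ⟨v - i, by omega⟩))
    (hg : Semicategory.comp g
          (b.homs ⟨v - i, by omega⟩ ⟨e, by omega⟩ (Fin.mk_lt_mk.mpr (by omega))) =
        homCast rfl hab (a.homs ⟨u, by omega⟩ ⟨i, by omega⟩ (Fin.mk_lt_mk.mpr (by omega)))) :
    g = gdiv hie hp a b hab hdiv u v hu hv1 hv2 :=
  (gdivEx hie hp a b hab hdiv u v hu hv1 hv2).choose_spec.2 g hg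

/-- Morphisms of the glued simplex. -/
noncomputable def ghoms (hdiv : LeftDivisible C) (u v : Fin (m + 1)) (huv : u.1 < v.1) :
    Semicategory.Hom (gobj hie hp a b u) (gobj hie hp a b v) :=
  if hv : v.1 < i then
    homCast (gobj_L hie hp a b u (by omega)).symm (gobj_L hie hp a b v hv).symm
      (a.homs ⟨u.1, by omega⟩ ⟨v.1, by omega⟩ (Fin.mk_lt_mk.mpr huv))
  else if hv2 : v.1 ≤ i + e then
    if hu : u.1 < i then
      if hv3 : v.1 < i + e then
        homCast (gobj_L hie hp a b u hu).symm (gobj_M hie hp a b v (by omega) hv2).symm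
          (gdiv hie hp a b hab hdiv u.1 v.1 hu (by omega) hv3)
      else
        homCast (gobj_L hie hp a b u hu).symm (gobj_M hie hp a b v (by omega) hv2).symm
          (homCast rfl (hab.trans (SemiNerve.obj_congr b (finmk_eq (by omega) (by omega)
              (by omega))))
            (a.homs ⟨u.1, by omega⟩ ⟨i, by omega⟩ (Fin.mk_lt_mk.mpr hu)))
    else
      homCast (gobj_M hie hp a b u (by omega) (by omega)).symm
        (gobj_M hie hp a b v (by omega) hv2).symm
        (b.homs ⟨u.1 - i, by omega⟩ ⟨v.1 - i, by omega⟩ (Fin.mk_lt_mk.mpr (by omega)))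
  else
    if hu : u.1 < i then
      homCast (gobj_L hie hp a b u hu).symm (gobj_H hie hp a b v (by omega)).symm
        (a.homs ⟨u.1, by omega⟩ ⟨v.1 - e, by have := v.isLt; omega⟩
          (Fin.mk_lt_mk.mpr (by omega)))
    else if hu2 : u.1 < i + e then
      homCast (gobj_M hie hp a b u (by omega) (by omega)).symm
        (gobj_H hie hp a b v (by omega)).symm
        (Semicategory.comp
          (b.homs ⟨u.1 - i, by omega⟩ ⟨e, by omega⟩ (Fin.mk_lt_mk.mpr (by omega)))
          (homCast hab rfl (a.homs ⟨i, by omega⟩ ⟨v.1 - e, by have := v.isLt; omega⟩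
            (Fin.mk_lt_mk.mpr (by omega)))))
    else if hu3 : u.1 = i + e then
      homCast (gobj_M hie hp a b u (by omega) (by omega)).symm
        (gobj_H hie hp a b v (by omega)).symm
        (homCast (hab.trans (SemiNerve.obj_congr b (finmk_eq (by omega) (by omega) (by omega))))
          rfl
          (a.homs ⟨i, by omega⟩ ⟨v.1 - e, by have := v.isLt; omega⟩
            (Fin.mk_lt_mk.mpr (by omega))))
    else
      homCast (gobj_H hie hp a b u (by omega)).symm (gobj_H hie hp a b v (by omega)).symm
        (a.homs ⟨u.1 - e, by have := u.isLt; omega⟩ ⟨v.1 - e, by have := v.isLt; omega⟩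
          (Fin.mk_lt_mk.mpr (by omega)))

theorem glue_case {A B D A' B' D' : C} (eA : A = A') (eB : B = B') (eD : D = D')
    (f : Semicategory.Hom A B) (g : Semicategory.Hom B D) (h : Semicategory.Hom A D)
    (raw : Semicategory.comp f g = h) :
    Semicategory.comp (homCast eA eB f) (homCast eB eD g) = homCast eA eD h := by
  subst eA; subst eB; subst eD; exact raw

end Glue

section Glue2

variable {C : Type u} [Semicategory.{u, v} C]
variable {m i e p : ℕ}
variable (hie : i + e + 1 ≤ m + 1) (hp : m - e = p) (a : SemiNerve C p) (b : SemiNerve C e)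
variable (hab : a.obj ⟨i, by omega⟩ = b.obj ⟨e, by omega⟩)

theorem ghcomp (hdiv : LeftDivisible C) (u v w : Fin (m + 1)) (h1 : u.1 < v.1)
    (h2 : v.1 < w.1) :
    Semicategory.comp (ghoms hie hp a b hab hdiv u v h1) (ghoms hie hp a b hab hdiv v w h2) =
      ghoms hie hp a b hab hdiv u w (h1.trans h2) := by
  unfold ghoms
  by_cases hw : w.1 < i
  · simp only [dif_pos hw, dif_pos (show v.1 < i by omega)]
    exact glue_case _ _ _ _ _ _ (a.hcomp _ _ _ _ _)
  · by_cases hw2 : w.1 ≤ i + e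
    · -- w ∈ M
      by_cases hv : v.1 < i
      · -- u, v ∈ L, w ∈ M
        simp only [dif_neg hw, dif_pos hw2, dif_pos hv, dif_pos (show u.1 < i by omega)]
        by_cases hw3 : w.1 < i + e
        · simp only [dif_pos hw3]
          refine glue_case _ _ _ _ _ _ ?_
          refine gdiv_uniq hie hp a b hab hdiv u.1 w.1 (by omega) (by omega) hw3 _ ?_
          rw [Semicategory.assoc,
            gdiv_spec hie hp a b hab hdiv v.1 w.1 hv (by omega) hw3, comp_cast_r]
          exact congrArg _ (a.hcomp _ _ _ _ _)
        · simp only [dif_neg hw3]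
          refine glue_case _ _ _ _ _ _ ?_
          rw [comp_cast_r]
          exact congrArg _ (a.hcomp _ _ _ _ _)
      · by_cases hu : u.1 < i
        · -- u ∈ L, v, w ∈ M
          simp only [dif_neg hw, dif_pos hw2, dif_neg hv,
            dif_pos (show v.1 ≤ i + e by omega), dif_pos hu,
            dif_pos (show v.1 < i + e by omega)]
          by_cases hw3 : w.1 < i + e
          · simp only [dif_pos hw3]
            refine glue_case _ _ _ _ _ _ ?_
            refine gdiv_uniq hie hp a b hab hdiv u.1 w.1 hu (by omega) hw3 _ ?_
            rw [Semicategory.assoc, b.hcomp]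
            exact gdiv_spec hie hp a b hab hdiv u.1 v.1 hu (by omega) (by omega)
          · simp only [dif_neg hw3]
            refine glue_case _ _ _ _ _ _ ?_
            apply eq_of_heq
            refine HEq.trans (comp_heq rfl rfl
              (SemiNerve.obj_congr b (finmk_eq (n := e + 1) (show w.1 - i = e by omega)
                (by omega) (by omega)))
              HEq.rfl
              (SemiNerve.homs_congr' b rfl (finmk_eq (n := e + 1) (show w.1 - i = e by omega)
                (by omega) (by omega)) (Fin.mk_lt_mk.mpr (by omega))
                (Fin.mk_lt_mk.mpr (by omega)))) ?_
            refine HEq.trans (heq_of_eq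
              (gdiv_spec hie hp a b hab hdiv u.1 v.1 hu (by omega) (by omega))) ?_
            exact (homCast_heq _ _ _).trans (homCast_heq _ _ _).symm
        · -- u, v, w ∈ M
          simp only [dif_neg hw, dif_pos hw2, dif_neg hv,
            dif_pos (show v.1 ≤ i + e by omega), dif_neg hu]
          exact glue_case _ _ _ _ _ _ (b.hcomp _ _ _ _ _)
    · -- w ∈ H
      by_cases hv : v.1 < i
      · -- u, v ∈ L, w ∈ H
        simp only [dif_neg hw, dif_neg hw2, dif_pos hv, dif_pos (show u.1 < i by omega)]
        exact glue_case _ _ _ _ _ _ (a.hcomp _ _ _ _ _)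
      · by_cases hv2 : v.1 ≤ i + e
        · -- v ∈ M, w ∈ H
          by_cases hu : u.1 < i
          · simp only [dif_neg hw, dif_neg hw2, dif_neg hv, dif_pos hv2, dif_pos hu]
            by_cases hv3 : v.1 < i + e
            · simp only [dif_pos hv3]
              refine glue_case _ _ _ _ _ _ ?_
              rw [← Semicategory.assoc,
                gdiv_spec hie hp a b hab hdiv u.1 v.1 hu (by omega) hv3, comp_cast_lr]
              exact a.hcomp _ _ _ _ _
            · simp only [dif_neg hv3, dif_pos (show v.1 = i + e by omega)]
              refine glue_case _ _ _ _ _ _ ?_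
              rw [comp_cast_lr]
              exact a.hcomp _ _ _ _ _
          · -- u ∈ M
            simp only [dif_neg hw, dif_neg hw2, dif_neg hv, dif_pos hv2, dif_neg hu,
              dif_pos (show u.1 < i + e by omega)]
            by_cases hv3 : v.1 < i + e
            · simp only [dif_pos hv3]
              refine glue_case _ _ _ _ _ _ ?_
              rw [← Semicategory.assoc, b.hcomp]
            · simp only [dif_neg hv3, dif_pos (show v.1 = i + e by omega)]
              refine glue_case _ _ _ _ _ _ ?_
              apply eq_of_heq
              have hg : HEq
                  (homCast (hab.trans (SemiNerve.obj_congr b (finmk_eq (n := e + 1)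
                      (show e = v.1 - i by omega) (by omega) (by omega)))) rfl
                    (a.homs (⟨i, by omega⟩ : Fin (p + 1)) ⟨w.1 - e, by have := w.isLt; omega⟩
                      (Fin.mk_lt_mk.mpr (by omega))))
                  (homCast hab rfl
                    (a.homs (⟨i, by omega⟩ : Fin (p + 1)) ⟨w.1 - e, by have := w.isLt; omega⟩
                      (Fin.mk_lt_mk.mpr (by omega)))) :=
                (homCast_heq _ _ _).trans (homCast_heq _ _ _).symm
              exact comp_heq rfl
                (SemiNerve.obj_congr b (finmk_eq (n := e + 1) (show v.1 - i = e by omega)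
                  (by omega) (by omega))) rfl
                (SemiNerve.homs_congr' b rfl (finmk_eq (n := e + 1) (show v.1 - i = e by omega)
                  (by omega) (by omega)) (Fin.mk_lt_mk.mpr (by omega))
                  (Fin.mk_lt_mk.mpr (by omega))) hg
        · -- v ∈ H, w ∈ H
          simp only [dif_neg hw, dif_neg hw2, dif_neg hv, dif_neg hv2,
            dif_neg (show ¬ v.1 < i + e by omega), dif_neg (show ¬ v.1 = i + e by omega)]
          by_cases hu : u.1 < i
          · simp only [dif_pos hu]
            exact glue_case _ _ _ _ _ _ (a.hcomp _ _ _ _ _)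
          · by_cases hu2 : u.1 < i + e
            · simp only [dif_neg hu, dif_pos hu2]
              refine glue_case _ _ _ _ _ _ ?_
              rw [Semicategory.assoc, comp_cast_l, a.hcomp]
            · by_cases hu3 : u.1 = i + e
              · simp only [dif_neg hu, dif_neg hu2, dif_pos hu3]
                refine glue_case _ _ _ _ _ _ ?_
                rw [comp_cast_l, a.hcomp]
              · simp only [dif_neg hu, dif_neg hu2, dif_neg hu3]
                exact glue_case _ _ _ _ _ _ (a.hcomp _ _ _ _ _)

end Glue2

section GMaps

variable {C : Type u} [Semicategory.{u, v} C]
variable {m i e p : ℕ}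

/-- The outer face map `{0,…,p} → {0,…,m}`. -/
def gOuter (hie : i + e + 1 ≤ m + 1) (hp : m - e = p) : Fin (p + 1) → Fin (m + 1) :=
  fun t => ⟨if t.1 < i then t.1 else t.1 + e, by have := t.isLt; split <;> omega⟩

/-- The inner face map `{0,…,e} → {0,…,m}`. -/
def gInner (hie : i + e + 1 ≤ m + 1) : Fin (e + 1) → Fin (m + 1) :=
  fun t => ⟨i + t.1, by have := t.isLt; omega⟩

variable (hie : i + e + 1 ≤ m + 1) (hp : m - e = p)

theorem gOuter_val_lt (t : Fin (p + 1)) (ht : t.1 < i) : (gOuter hie hp t).1 = t.1 :=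
  if_pos ht

theorem gOuter_val_ge (t : Fin (p + 1)) (ht : ¬ t.1 < i) : (gOuter hie hp t).1 = t.1 + e :=
  if_neg ht

theorem gOuter_mono : StrictMono (gOuter hie hp) := by
  intro s t hst
  have h : s.1 < t.1 := hst
  show (gOuter hie hp s).1 < (gOuter hie hp t).1
  by_cases hs : s.1 < i <;> by_cases ht : t.1 < i <;>
    first
      | (rw [gOuter_val_lt hie hp s hs, gOuter_val_lt hie hp t ht]; omega)
      | (rw [gOuter_val_lt hie hp s hs, gOuter_val_ge hie hp t ht]; omega)
      | (rw [gOuter_val_ge hie hp s hs, gOuter_val_lt hie hp t ht]; omega)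
      | (rw [gOuter_val_ge hie hp s hs, gOuter_val_ge hie hp t ht]; omega)

theorem gInner_val (t : Fin (e + 1)) : (gInner hie t).1 = i + t.1 := rfl

theorem gInner_mono : StrictMono (gInner hie) := by
  intro s t hst
  have h : s.1 < t.1 := hst
  show (gInner hie s).1 < (gInner hie t).1
  rw [gInner_val, gInner_val]
  omega

end GMaps

section Glue3

variable {C : Type u} [Semicategory.{u, v} C]
variable {m i e p : ℕ}
variable (hie : i + e + 1 ≤ m + 1) (hp : m - e = p) (a : SemiNerve C p) (b : SemiNerve C e)
variable (hab : a.obj ⟨i, by omega⟩ = b.obj ⟨e, by omega⟩)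

theorem ghoms_LL (hdiv : LeftDivisible C) (u v : Fin (m + 1)) (huv : u.1 < v.1)
    (hv : v.1 < i) :
    HEq (ghoms hie hp a b hab hdiv u v huv)
      (a.homs ⟨u.1, by omega⟩ ⟨v.1, by omega⟩ (Fin.mk_lt_mk.mpr huv)) := by
  unfold ghoms
  simp only [dif_pos hv]
  exact homCast_heq _ _ _

theorem ghoms_LM (hdiv : LeftDivisible C) (u v : Fin (m + 1)) (huv : u.1 < v.1)
    (hu : u.1 < i) (hv1 : ¬ v.1 < i) (hv3 : v.1 < i + e) :
    HEq (ghoms hie hp a b hab hdiv u v huv)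
      (gdiv hie hp a b hab hdiv u.1 v.1 hu (by omega) hv3) := by
  unfold ghoms
  simp only [dif_neg hv1, dif_pos (show v.1 ≤ i + e by omega), dif_pos hu, dif_pos hv3]
  exact homCast_heq _ _ _

theorem ghoms_LMe (hdiv : LeftDivisible C) (u v : Fin (m + 1)) (huv : u.1 < v.1)
    (hu : u.1 < i) (hv1 : ¬ v.1 < i) (hv2 : v.1 ≤ i + e) (hv3 : ¬ v.1 < i + e) :
    HEq (ghoms hie hp a b hab hdiv u v huv)
      (a.homs ⟨u.1, by omega⟩ ⟨i, by omega⟩ (Fin.mk_lt_mk.mpr hu)) := by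
  unfold ghoms
  simp only [dif_neg hv1, dif_pos hv2, dif_pos hu, dif_neg hv3]
  exact (homCast_heq _ _ _).trans (homCast_heq _ _ _)

theorem ghoms_MM (hdiv : LeftDivisible C) (u v : Fin (m + 1)) (huv : u.1 < v.1)
    (hu : ¬ u.1 < i) (hv1 : ¬ v.1 < i) (hv2 : v.1 ≤ i + e) :
    HEq (ghoms hie hp a b hab hdiv u v huv)
      (b.homs ⟨u.1 - i, by omega⟩ ⟨v.1 - i, by omega⟩ (Fin.mk_lt_mk.mpr (by omega))) := by
  unfold ghoms
  simp only [dif_neg hv1, dif_pos hv2, dif_neg hu]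
  exact homCast_heq _ _ _

theorem ghoms_LH (hdiv : LeftDivisible C) (u v : Fin (m + 1)) (huv : u.1 < v.1)
    (hu : u.1 < i) (hv1 : ¬ v.1 < i) (hv2 : ¬ v.1 ≤ i + e) :
    HEq (ghoms hie hp a b hab hdiv u v huv)
      (a.homs ⟨u.1, by omega⟩ ⟨v.1 - e, by have := v.isLt; omega⟩
        (Fin.mk_lt_mk.mpr (by omega))) := by
  unfold ghoms
  simp only [dif_neg hv1, dif_neg hv2, dif_pos hu]
  exact homCast_heq _ _ _

theorem ghoms_MH (hdiv : LeftDivisible C) (u v : Fin (m + 1)) (huv : u.1 < v.1)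
    (hu1 : ¬ u.1 < i) (hu2 : u.1 < i + e) (hv1 : ¬ v.1 < i) (hv2 : ¬ v.1 ≤ i + e) :
    HEq (ghoms hie hp a b hab hdiv u v huv)
      (Semicategory.comp
        (b.homs ⟨u.1 - i, by omega⟩ ⟨e, by omega⟩ (Fin.mk_lt_mk.mpr (by omega)))
        (homCast hab rfl (a.homs ⟨i, by omega⟩ ⟨v.1 - e, by have := v.isLt; omega⟩
          (Fin.mk_lt_mk.mpr (by omega))))) := by
  unfold ghoms
  simp only [dif_neg hv1, dif_neg hv2, dif_neg hu1, dif_pos hu2]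
  exact homCast_heq _ _ _

theorem ghoms_MeH (hdiv : LeftDivisible C) (u v : Fin (m + 1)) (huv : u.1 < v.1)
    (hu1 : ¬ u.1 < i) (hu2 : ¬ u.1 < i + e) (hu3 : u.1 = i + e) (hv1 : ¬ v.1 < i)
    (hv2 : ¬ v.1 ≤ i + e) :
    HEq (ghoms hie hp a b hab hdiv u v huv)
      (a.homs ⟨i, by omega⟩ ⟨v.1 - e, by have := v.isLt; omega⟩
        (Fin.mk_lt_mk.mpr (by omega))) := by
  unfold ghoms
  simp only [dif_neg hv1, dif_neg hv2, dif_neg hu1, dif_neg hu2, dif_pos hu3]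
  exact (homCast_heq _ _ _).trans (homCast_heq _ _ _)

theorem ghoms_HH (hdiv : LeftDivisible C) (u v : Fin (m + 1)) (huv : u.1 < v.1)
    (hu1 : ¬ u.1 < i) (hu2 : ¬ u.1 < i + e) (hu3 : ¬ u.1 = i + e) (hv1 : ¬ v.1 < i)
    (hv2 : ¬ v.1 ≤ i + e) :
    HEq (ghoms hie hp a b hab hdiv u v huv)
      (a.homs ⟨u.1 - e, by have := u.isLt; omega⟩ ⟨v.1 - e, by have := v.isLt; omega⟩
        (Fin.mk_lt_mk.mpr (by omega))) := by
  unfold ghoms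
  simp only [dif_neg hv1, dif_neg hv2, dif_neg hu1, dif_neg hu2, dif_neg hu3]
  exact homCast_heq _ _ _

/-- The glued simplex. -/
noncomputable def glue (hdiv : LeftDivisible C) : SemiNerve C m where
  obj := gobj hie hp a b
  homs := fun u v huv => ghoms hie hp a b hab hdiv u v huv
  hcomp := fun u v w h1 h2 => ghcomp hie hp a b hab hdiv u v w h1 h2

end Glue3

section Glue4

variable {C : Type u} [Semicategory.{u, v} C]
variable {m i e p : ℕ}
variable (hie : i + e + 1 ≤ m + 1) (hp : m - e = p) (a : SemiNerve C p) (b : SemiNerve C e)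
variable (hab : a.obj ⟨i, by omega⟩ = b.obj ⟨e, by omega⟩)

theorem glue_restrict_outer (hdiv : LeftDivisible C) :
    SemiNerve.restrict (gOuter hie hp) (gOuter_mono hie hp)
      (glue hie hp a b hab hdiv) = a := by
  apply SemiNerve.ext'
  · funext t
    show gobj hie hp a b (gOuter hie hp t) = a.obj t
    by_cases ht : t.1 < i
    · rw [gobj_L hie hp a b _ (by rw [gOuter_val_lt hie hp t ht]; exact ht)]
      exact SemiNerve.obj_congr a (Fin.ext (show (gOuter hie hp t).1 = t.1 from
        gOuter_val_lt hie hp t ht))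
    · by_cases ht3 : t.1 = i
      · rw [gobj_M hie hp a b _ (by rw [gOuter_val_ge hie hp t ht]; omega)
          (by rw [gOuter_val_ge hie hp t ht]; omega)]
        refine ((SemiNerve.obj_congr b (finmk_eq (n := e + 1)
          (show (gOuter hie hp t).1 - i = e by rw [gOuter_val_ge hie hp t ht]; omega)
          (by rw [gOuter_val_ge hie hp t ht]; omega) (by omega))).trans (hab.symm.trans
          (SemiNerve.obj_congr a (Fin.ext (show (i : ℕ) = t.1 by omega)))))
      · rw [gobj_H hie hp a b _ (by rw [gOuter_val_ge hie hp t ht]; omega)]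
        exact SemiNerve.obj_congr a (Fin.ext (show (gOuter hie hp t).1 - e = t.1 by
          rw [gOuter_val_ge hie hp t ht]; omega))
  · intro s t hst
    have hst' : s.1 < t.1 := hst
    show HEq (ghoms hie hp a b hab hdiv (gOuter hie hp s) (gOuter hie hp t)
      (gOuter_mono hie hp hst)) (a.homs s t hst)
    by_cases ht : t.1 < i
    · have hs : s.1 < i := by omega
      have c1 : (gOuter hie hp t).1 < i := by rw [gOuter_val_lt hie hp t ht]; exact ht
      refine HEq.trans (ghoms_LL hie hp a b hab hdiv (gOuter hie hp s) (gOuter hie hp t)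
        (gOuter_mono hie hp hst) c1) ?_
      exact SemiNerve.homs_congr' a
        (Fin.ext (show (gOuter hie hp s).1 = s.1 from gOuter_val_lt hie hp s hs))
        (Fin.ext (show (gOuter hie hp t).1 = t.1 from gOuter_val_lt hie hp t ht)) _ _
    · by_cases hs : s.1 < i
      · have cu : (gOuter hie hp s).1 < i := by rw [gOuter_val_lt hie hp s hs]; exact hs
        by_cases ht3 : t.1 = i
        · have c1 : ¬ (gOuter hie hp t).1 < i := by rw [gOuter_val_ge hie hp t ht]; omega
          have c2 : (gOuter hie hp t).1 ≤ i + e := by rw [gOuter_val_ge hie hp t ht]; omega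
          have c3 : ¬ (gOuter hie hp t).1 < i + e := by
            rw [gOuter_val_ge hie hp t ht]; omega
          refine HEq.trans (ghoms_LMe hie hp a b hab hdiv (gOuter hie hp s)
            (gOuter hie hp t) (gOuter_mono hie hp hst) cu c1 c2 c3) ?_
          exact SemiNerve.homs_congr' a
            (Fin.ext (show (gOuter hie hp s).1 = s.1 from gOuter_val_lt hie hp s hs))
            (Fin.ext (show (i : ℕ) = t.1 by omega)) _ _
        · have c1 : ¬ (gOuter hie hp t).1 < i := by rw [gOuter_val_ge hie hp t ht]; omega
          have c2 : ¬ (gOuter hie hp t).1 ≤ i + e := by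
            rw [gOuter_val_ge hie hp t ht]; omega
          refine HEq.trans (ghoms_LH hie hp a b hab hdiv (gOuter hie hp s)
            (gOuter hie hp t) (gOuter_mono hie hp hst) cu c1 c2) ?_
          exact SemiNerve.homs_congr' a
            (Fin.ext (show (gOuter hie hp s).1 = s.1 from gOuter_val_lt hie hp s hs))
            (Fin.ext (show (gOuter hie hp t).1 - e = t.1 by
              rw [gOuter_val_ge hie hp t ht]; omega)) _ _
      · have ht' : ¬ t.1 < i := by omega
        have c1 : ¬ (gOuter hie hp t).1 < i := by rw [gOuter_val_ge hie hp t ht']; omega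
        have c2 : ¬ (gOuter hie hp t).1 ≤ i + e := by
          rw [gOuter_val_ge hie hp t ht']; omega
        have d1 : ¬ (gOuter hie hp s).1 < i := by rw [gOuter_val_ge hie hp s hs]; omega
        by_cases hs3 : s.1 = i
        · have d2 : ¬ (gOuter hie hp s).1 < i + e := by
            rw [gOuter_val_ge hie hp s hs]; omega
          have d3 : (gOuter hie hp s).1 = i + e := by rw [gOuter_val_ge hie hp s hs]; omega
          refine HEq.trans (ghoms_MeH hie hp a b hab hdiv (gOuter hie hp s)
            (gOuter hie hp t) (gOuter_mono hie hp hst) d1 d2 d3 c1 c2) ?_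
          exact SemiNerve.homs_congr' a
            (Fin.ext (show (i : ℕ) = s.1 by omega))
            (Fin.ext (show (gOuter hie hp t).1 - e = t.1 by
              rw [gOuter_val_ge hie hp t ht']; omega)) _ _
        · have d2 : ¬ (gOuter hie hp s).1 < i + e := by
            rw [gOuter_val_ge hie hp s hs]; omega
          have d3 : ¬ (gOuter hie hp s).1 = i + e := by
            rw [gOuter_val_ge hie hp s hs]; omega
          refine HEq.trans (ghoms_HH hie hp a b hab hdiv (gOuter hie hp s)
            (gOuter hie hp t) (gOuter_mono hie hp hst) d1 d2 d3 c1 c2) ?_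
          exact SemiNerve.homs_congr' a
            (Fin.ext (show (gOuter hie hp s).1 - e = s.1 by
              rw [gOuter_val_ge hie hp s hs]; omega))
            (Fin.ext (show (gOuter hie hp t).1 - e = t.1 by
              rw [gOuter_val_ge hie hp t ht']; omega)) _ _

theorem glue_restrict_inner (hdiv : LeftDivisible C) :
    SemiNerve.restrict (gInner hie) (gInner_mono hie)
      (glue hie hp a b hab hdiv) = b := by
  apply SemiNerve.ext'
  · funext t
    show gobj hie hp a b (gInner hie t) = b.obj t
    rw [gobj_M hie hp a b _ (by rw [gInner_val]; omega)
      (by rw [gInner_val]; have := t.isLt; omega)]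
    exact SemiNerve.obj_congr b (Fin.ext (show (gInner hie t).1 - i = t.1 by
      rw [gInner_val]; omega))
  · intro s t hst
    have hst' : s.1 < t.1 := hst
    show HEq (ghoms hie hp a b hab hdiv (gInner hie s) (gInner hie t)
      (gInner_mono hie hst)) (b.homs s t hst)
    have c1 : ¬ (gInner hie s).1 < i := by rw [gInner_val]; omega
    have c2 : ¬ (gInner hie t).1 < i := by rw [gInner_val]; omega
    have c3 : (gInner hie t).1 ≤ i + e := by rw [gInner_val]; have := t.isLt; omega
    have c4 : (gInner hie s).1 < (gInner hie t).1 := by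
      rw [gInner_val, gInner_val]; omega
    refine HEq.trans (ghoms_MM hie hp a b hab hdiv (gInner hie s) (gInner hie t)
      c4 c1 c2 c3) ?_
    exact SemiNerve.homs_congr' b
      (Fin.ext (show (gInner hie s).1 - i = s.1 by rw [gInner_val]; omega))
      (Fin.ext (show (gInner hie t).1 - i = t.1 by rw [gInner_val]; omega)) _ _

end Glue4

section Glue5

variable {C : Type u} [Semicategory.{u, v} C]
variable {m i e p : ℕ}
variable (hie : i + e + 1 ≤ m + 1) (hp : m - e = p) (a : SemiNerve C p) (b : SemiNerve C e)
variable (hab : a.obj ⟨i, by omega⟩ = b.obj ⟨e, by omega⟩)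

theorem glue_uniq (hdiv : LeftDivisible C) (x : SemiNerve C m)
    (hxa : SemiNerve.restrict (gOuter hie hp) (gOuter_mono hie hp) x = a)
    (hxb : SemiNerve.restrict (gInner hie) (gInner_mono hie) x = b) :
    x = glue hie hp a b hab hdiv := by
  have EA : ∀ s : Fin (p + 1), x.obj (gOuter hie hp s) = a.obj s :=
    fun s => congrArg (fun z : SemiNerve C p => z.obj s) hxa
  have EB : ∀ t : Fin (e + 1), x.obj (gInner hie t) = b.obj t :=
    fun t => congrArg (fun z : SemiNerve C e => z.obj t) hxb
  have HA : ∀ (s t : Fin (p + 1)) (hst : s < t),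
      HEq (x.homs (gOuter hie hp s) (gOuter hie hp t) (gOuter_mono hie hp hst))
        (a.homs s t hst) := fun s t hst => SemiNerve.homs_heq hxa s t hst hst
  have HB : ∀ (s t : Fin (e + 1)) (hst : s < t),
      HEq (x.homs (gInner hie s) (gInner hie t) (gInner_mono hie hst))
        (b.homs s t hst) := fun s t hst => SemiNerve.homs_heq hxb s t hst hst
  have gidL : ∀ (v : Fin (m + 1)) (hv : v.1 < i),
      gOuter hie hp ⟨v.1, by omega⟩ = v :=
    fun v hv => Fin.ext (gOuter_val_lt hie hp _ hv)
  have gidH : ∀ (v : Fin (m + 1)) (hv : i + e ≤ v.1),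
      gOuter hie hp ⟨v.1 - e, by have := v.isLt; omega⟩ = v :=
    fun v hv => Fin.ext ((gOuter_val_ge hie hp _ (show ¬ v.1 - e < i by omega)).trans
      (show v.1 - e + e = v.1 by omega))
  have gidM : ∀ (v : Fin (m + 1)) (h1 : i ≤ v.1) (h2 : v.1 ≤ i + e),
      gInner hie ⟨v.1 - i, by omega⟩ = v :=
    fun v h1 h2 => Fin.ext (show i + (v.1 - i) = v.1 by omega)
  have gidB : gOuter hie hp ⟨i, by omega⟩ = ⟨i + e, by omega⟩ :=
    Fin.ext (gOuter_val_ge hie hp ⟨i, by omega⟩ (show ¬ (i : ℕ) < i by omega))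
  have gidB' : gInner hie ⟨e, by omega⟩ = (⟨i + e, by omega⟩ : Fin (m + 1)) :=
    Fin.ext rfl
  have OL : ∀ (v : Fin (m + 1)) (hv : v.1 < i), x.obj v = a.obj ⟨v.1, by omega⟩ :=
    fun v hv => (SemiNerve.obj_congr x (gidL v hv).symm).trans (EA _)
  have OM : ∀ (v : Fin (m + 1)) (h1 : i ≤ v.1) (h2 : v.1 ≤ i + e),
      x.obj v = b.obj ⟨v.1 - i, by omega⟩ :=
    fun v h1 h2 => (SemiNerve.obj_congr x (gidM v h1 h2).symm).trans (EB _)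
  have OH : ∀ (v : Fin (m + 1)) (hv : i + e ≤ v.1),
      x.obj v = a.obj ⟨v.1 - e, by have := v.isLt; omega⟩ :=
    fun v hv => (SemiNerve.obj_congr x (gidH v hv).symm).trans (EA _)
  have OB : x.obj ⟨i + e, by omega⟩ = b.obj ⟨e, by omega⟩ :=
    (SemiNerve.obj_congr x gidB'.symm).trans (EB _)
  have XA : ∀ (u v : Fin (m + 1)) (huv : u < v) (su sv : Fin (p + 1))
      (hsu : gOuter hie hp su = u) (hsv : gOuter hie hp sv = v) (hst : su < sv),
      HEq (x.homs u v huv) (a.homs su sv hst) := by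
    intro u v huv su sv hsu hsv hst
    exact HEq.trans (SemiNerve.homs_congr' x hsu.symm hsv.symm huv
      (gOuter_mono hie hp hst)) (HA su sv hst)
  have XB : ∀ (u v : Fin (m + 1)) (huv : u < v) (su sv : Fin (e + 1))
      (hsu : gInner hie su = u) (hsv : gInner hie sv = v) (hst : su < sv),
      HEq (x.homs u v huv) (b.homs su sv hst) := by
    intro u v huv su sv hsu hsv hst
    exact HEq.trans (SemiNerve.homs_congr' x hsu.symm hsv.symm huv
      (gInner_mono hie hst)) (HB su sv hst)
  apply SemiNerve.ext'
  · funext v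
    show x.obj v = gobj hie hp a b v
    by_cases h1 : v.1 < i
    · exact (OL v h1).trans (gobj_L hie hp a b v h1).symm
    · by_cases h2 : v.1 ≤ i + e
      · exact (OM v (by omega) h2).trans (gobj_M hie hp a b v (by omega) h2).symm
      · exact (OH v (by omega)).trans (gobj_H hie hp a b v (by omega)).symm
  · intro u v huv
    have huv' : u.1 < v.1 := huv
    show HEq (x.homs u v huv) (ghoms hie hp a b hab hdiv u v huv)
    by_cases hv : v.1 < i
    · have hu : u.1 < i := by omega
      refine HEq.trans (XA u v huv ⟨u.1, by omega⟩ ⟨v.1, by omega⟩ (gidL u hu) (gidL v hv)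
        (Fin.mk_lt_mk.mpr huv')) ?_
      exact (ghoms_LL hie hp a b hab hdiv u v huv' hv).symm
    · by_cases hv2 : v.1 ≤ i + e
      · by_cases hu : u.1 < i
        · by_cases hv3 : v.1 < i + e
          · -- the divisor case
            have exu : x.obj u = a.obj ⟨u.1, by omega⟩ := OL u hu
            have exv : x.obj v = b.obj ⟨v.1 - i, by omega⟩ := OM v (by omega) hv2
            have hltv : v < (⟨i + e, by omega⟩ : Fin (m + 1)) := by
              show v.1 < i + e; omega
            have hltu : u < (⟨i + e, by omega⟩ : Fin (m + 1)) := by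
              show u.1 < i + e; omega
            have key : Semicategory.comp (homCast exu exv (x.homs u v huv))
                (b.homs ⟨v.1 - i, by omega⟩ ⟨e, by omega⟩ (Fin.mk_lt_mk.mpr (by omega))) =
                homCast rfl hab (a.homs ⟨u.1, by omega⟩ ⟨i, by omega⟩
                  (Fin.mk_lt_mk.mpr hu)) := by
              apply eq_of_heq
              refine HEq.trans (comp_heq exu.symm exv.symm OB.symm
                (homCast_heq exu exv _)
                (XB v ⟨i + e, by omega⟩ hltv ⟨v.1 - i, by omega⟩ ⟨e, by omega⟩
                  (gidM v (by omega) hv2) gidB' (Fin.mk_lt_mk.mpr (by omega))).symm) ?_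
              refine HEq.trans (heq_of_eq (x.hcomp u v ⟨i + e, by omega⟩ huv hltv)) ?_
              refine HEq.trans (XA u ⟨i + e, by omega⟩ hltu ⟨u.1, by omega⟩ ⟨i, by omega⟩
                (gidL u hu) gidB (Fin.mk_lt_mk.mpr hu)) ?_
              exact (homCast_heq rfl hab _).symm
            have hkey := gdiv_uniq hie hp a b hab hdiv u.1 v.1 hu (by omega) hv3 _ key
            refine HEq.trans ((homCast_heq exu exv (x.homs u v huv)).symm.trans
              (heq_of_eq hkey)) ?_
            exact (ghoms_LM hie hp a b hab hdiv u v huv' hu hv hv3).symm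
          · -- v.1 = i + e
            refine HEq.trans (XA u v huv ⟨u.1, by omega⟩ ⟨i, by omega⟩ (gidL u hu)
              (gidB.trans (Fin.ext (show i + e = v.1 by omega)))
              (Fin.mk_lt_mk.mpr hu)) ?_
            exact (ghoms_LMe hie hp a b hab hdiv u v huv' hu hv hv2 hv3).symm
        · refine HEq.trans (XB u v huv ⟨u.1 - i, by omega⟩ ⟨v.1 - i, by omega⟩
            (gidM u (by omega) (by omega)) (gidM v (by omega) hv2)
            (Fin.mk_lt_mk.mpr (by omega))) ?_
          exact (ghoms_MM hie hp a b hab hdiv u v huv' hu hv hv2).symm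
      · by_cases hu : u.1 < i
        · refine HEq.trans (XA u v huv ⟨u.1, by omega⟩
            ⟨v.1 - e, by have := v.isLt; omega⟩ (gidL u hu) (gidH v (by omega))
            (Fin.mk_lt_mk.mpr (by omega))) ?_
          exact (ghoms_LH hie hp a b hab hdiv u v huv' hu hv hv2).symm
        · by_cases hu2 : u.1 < i + e
          · have hltu : u < (⟨i + e, by omega⟩ : Fin (m + 1)) := by
              show u.1 < i + e; omega
            have hltv : (⟨i + e, by omega⟩ : Fin (m + 1)) < v := by
              show i + e < v.1; omega
            refine HEq.trans (heq_of_eq (x.hcomp u ⟨i + e, by omega⟩ v hltu hltv).symm) ?_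
            refine HEq.trans (comp_heq (OM u (by omega) (by omega)) OB
              (OH v (by omega))
              (XB u ⟨i + e, by omega⟩ hltu ⟨u.1 - i, by omega⟩ ⟨e, by omega⟩
                (gidM u (by omega) (by omega)) gidB' (Fin.mk_lt_mk.mpr (by omega)))
              ((XA ⟨i + e, by omega⟩ v hltv ⟨i, by omega⟩
                  ⟨v.1 - e, by have := v.isLt; omega⟩ gidB (gidH v (by omega))
                  (Fin.mk_lt_mk.mpr (by omega))).trans
                (homCast_heq hab rfl (a.homs ⟨i, by omega⟩
                  ⟨v.1 - e, by have := v.isLt; omega⟩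
                  (Fin.mk_lt_mk.mpr (by omega)))).symm)) ?_
            exact (ghoms_MH hie hp a b hab hdiv u v huv' hu hu2 hv hv2).symm
          · by_cases hu3 : u.1 = i + e
            · refine HEq.trans (XA u v huv ⟨i, by omega⟩
                ⟨v.1 - e, by have := v.isLt; omega⟩
                (gidB.trans (Fin.ext (show i + e = u.1 by omega))) (gidH v (by omega))
                (Fin.mk_lt_mk.mpr (by omega))) ?_
              exact (ghoms_MeH hie hp a b hab hdiv u v huv' hu hu2 hu3 hv hv2).symm
            · refine HEq.trans (XA u v huv ⟨u.1 - e, by have := u.isLt; omega⟩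
                ⟨v.1 - e, by have := v.isLt; omega⟩ (gidH u (by omega)) (gidH v (by omega))
                (Fin.mk_lt_mk.mpr (by omega))) ?_
              exact (ghoms_HH hie hp a b hab hdiv u v huv' hu hu2 hu3 hv hv2).symm

include hab in
theorem glue_core (hdiv : LeftDivisible C) :
    ∃! x : SemiNerve C m,
      SemiNerve.restrict (gOuter hie hp) (gOuter_mono hie hp) x = a ∧
        SemiNerve.restrict (gInner hie) (gInner_mono hie) x = b :=
  ⟨glue hie hp a b hab hdiv,
    ⟨glue_restrict_outer hie hp a b hab hdiv, glue_restrict_inner hie hp a b hab hdiv⟩,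
    fun x hx => glue_uniq hie hp a b hab hdiv x hx.1 hx.2⟩

end Glue5

section Bridge

theorem bij_of_d (X : SemiSSet.{u}) (n i j d : ℕ) (hij : i < j) (hj : j ≤ n)
    (hd : j - i = d)
    (H : ∀ (a : X.obj (n - d + 1)) (b : X.obj d),
      X.map (intervalF i 1 (by omega)) (intervalF_mono i 1 (by omega)) a =
        X.map (endsF d (by omega)) (endsF_mono d (by omega)) b →
      ∃! x : X.obj n,
        X.map (fun k : Fin (n - d + 2) =>
            (⟨if k.1 ≤ i then k.1 else k.1 + d - 1, by have := k.isLt; split <;> omega⟩ :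
              Fin (n + 1)))
          (by
            intro s t hst
            have h' : s.1 < t.1 := hst
            have := s.isLt
            have := t.isLt
            simp only [Fin.mk_lt_mk]
            split <;> split <;> omega) x = a ∧
        X.map (intervalF i d (by omega)) (intervalF_mono i d (by omega)) x = b) :
    TwoSegalMapBij X n i j hij hj := by
  subst hd
  exact H

variable {C : Type u} [Semicategory.{u, v} C]

theorem backward_seg (hdiv : LeftDivisible C) : IsTwoSegal (susp C) := by
  intro n i j _h3 hij hj
  obtain ⟨m, rfl⟩ : ∃ m, n = m + 1 := ⟨n - 1, by omega⟩
  obtain ⟨e, rfl⟩ : ∃ e, j = i + (e + 1) := ⟨j - i - 1, by omega⟩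
  have hie : i + e + 1 ≤ m + 1 := by omega
  have hp : m - e = m + 1 - (e + 1) := by omega
  refine bij_of_d (susp C) (m + 1) i (i + (e + 1)) (e + 1) hij hj (by omega) ?_
  intro a b hab
  have hx : a.obj ⟨i, by omega⟩ = b.obj ⟨e, by omega⟩ := by
    have h0 := congrArg (fun z : SemiNerve C 0 => z.obj ⟨0, by omega⟩) hab
    refine (h0.trans (SemiNerve.obj_congr b (Fin.ext
      (show 1 * (e + 1) - 1 = e by omega))))
  have hfo : finShift (fun k : Fin (m + 1 - (e + 1) + 2) =>
        (⟨if k.1 ≤ i then k.1 else k.1 + (e + 1) - 1,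
          by have := k.isLt; split <;> omega⟩ : Fin (m + 1 + 1)))
      (by
        intro s t hst
        have h' : s.1 < t.1 := hst
        have := s.isLt
        have := t.isLt
        simp only [Fin.mk_lt_mk]
        split <;> split <;> omega) = gOuter hie hp := by
    funext t
    apply Fin.ext
    show (if t.1 + 1 ≤ i then t.1 + 1 else t.1 + 1 + (e + 1) - 1) - 1 =
      if t.1 < i then t.1 else t.1 + e
    split <;> split <;> omega
  have hfi : finShift (intervalF i (e + 1) (by omega)) (intervalF_mono i (e + 1) (by omega)) =
      gInner hie := by
    funext t
    apply Fin.ext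
    show i + (t.1 + 1) - 1 = i + t.1
    omega
  obtain ⟨x₀, ⟨hra, hrb⟩, huq⟩ :=
    glue_core (p := m + 1 - (e + 1)) hie hp a b hx hdiv
  refine ⟨x₀, ⟨?_, ?_⟩, ?_⟩
  · exact (SemiNerve.restrict_congr hfo _ (gOuter_mono hie hp) x₀).trans hra
  · exact (SemiNerve.restrict_congr hfi _ (gInner_mono hie) x₀).trans hrb
  · intro y hy
    refine huq y ⟨?_, ?_⟩
    · exact (SemiNerve.restrict_congr hfo.symm (gOuter_mono hie hp) _ y).trans hy.1
    · exact (SemiNerve.restrict_congr hfi.symm (gInner_mono hie) _ y).trans hy.2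

end Bridge
/-- The left suspension of the nerve of a semicategory `𝒞` is 2-Segal iff `𝒞` is
left divisible: for all `f : y → z` and `h : x → z` there is a unique `g : x → y`
with `h = f ∘ g`. -/
theorem susp_twoSegal_iff_leftDivisible (C : Type u) [Semicategory.{u, v} C] :
    IsTwoSegal (susp C) ↔
      (∀ {x y z : C} (f : Semicategory.Hom y z) (h : Semicategory.Hom x z),
        ∃! g : Semicategory.Hom x y, Semicategory.comp g f = h) := by
  constructor
  · exact forward_div
  · intro hdiv
    exact backward_seg fun {x y z} f h => hdiv f h

end SemiSeg
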